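/- arXiv:2507.13799 — 6 statements merged into one kernel-verified Lean document; each statement's English description precedes it below -/
import Mathlib

section
/- Let A ≥ 1 be a natural number, K ≥ 0, and let b : (Fin A → ℝ) → (Fin A → ℝ) be Lipschitz with constant K and satisfy: (i) for every y ∈ S_Y and every k, if y_k = 0 then b_k(y) ≥ 0; (ii) for every y ∈ S_Y with ∑_{k=0}^{A−1} y_k = 1, ∑_{k=0}^{A−1} b_k(y) ≤ 0. Then for every y₀ ∈ S_Y there exists Y : ℝ → (Fin A → ℝ) such that Y(0) = y₀, Y(t) ∈ S_Y for all t ≥ 0, and Y is differentiable within [0,∞) at every t ≥ 0 with derivative b(Y(t)); moreover, any two functions with these three properties agree on [0,∞). -/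
/-!
Truncating the coordinates to `[0, 1]` turns `b` into a bounded Lipschitz field `v` that agrees
with `b` on `S_Y`; Picard–Lindelöf on every `[0, n + 1]`, glued by uniqueness, gives a solution of
`Y' = v(Y)` on `[0, ∞)`. It stays in `S_Y` by Nagumo's argument: (i) and (ii) say that
`y + h • v y ∈ S_Y` for all small `h > 0` whenever `y ∈ S_Y`, so the distance `g t` from `Y t` to
`S_Y` has upper right Dini derivative at most `K * g t`, and Grönwall with `g 0 = 0` gives `g = 0`.
On `S_Y` the field `v` is `b`, and uniqueness is again Grönwall for a Lipschitz field.
-/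

/-- The simplex `S_Y` of sub-probability vectors in `[0,1]^A`. -/
def SY (A : ℕ) : Set (Fin A → ℝ) :=
  {y | (∀ k, 0 ≤ y k ∧ y k ≤ 1) ∧ ∑ k, y k ≤ 1}

open Set Filter Metric Topology

section ODE

variable {E : Type*} [NormedAddCommGroup E] [NormedSpace ℝ E] {v : E → E} {K : NNReal}

theorem IsIntegralCurveOn.eqOn_Icc (hv : LipschitzWith K v) {f g : ℝ → E} {a b : ℝ}
    (hf : IsIntegralCurveOn f (fun _ ↦ v) (Icc a b))
    (hg : IsIntegralCurveOn g (fun _ ↦ v) (Icc a b))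
    (ha : f a = g a) : EqOn f g (Icc a b) :=
  ODE_solution_unique (fun _ ↦ hv) hf.continuousOn
    (fun t ht ↦ (hf t (Ico_subset_Icc_self ht)).mono_of_mem_nhdsWithin (Icc_mem_nhdsGE_of_mem ht))
    hg.continuousOn
    (fun t ht ↦ (hg t (Ico_subset_Icc_self ht)).mono_of_mem_nhdsWithin (Icc_mem_nhdsGE_of_mem ht))
    ha

theorem IsIntegralCurveOn.eqOn_Ici (hv : LipschitzWith K v) {f g : ℝ → E} {a : ℝ}
    (hf : IsIntegralCurveOn f (fun _ ↦ v) (Ici a))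
    (hg : IsIntegralCurveOn g (fun _ ↦ v) (Ici a))
    (ha : f a = g a) : EqOn f g (Ici a) := fun _ ht ↦
  IsIntegralCurveOn.eqOn_Icc hv (hf.mono Icc_subset_Ici_self) (hg.mono Icc_subset_Ici_self) ha
    ⟨ht, le_rfl⟩

theorem exists_isIntegralCurveOn_Icc [CompleteSpace E] (hv : LipschitzWith K v) {C : ℝ}
    (hC : ∀ x, ‖v x‖ ≤ C) (x₀ : E) {T : ℝ} (hT : 0 ≤ T) :
    ∃ γ : ℝ → E, γ 0 = x₀ ∧ IsIntegralCurveOn γ (fun _ ↦ v) (Icc 0 T) :=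
  have hC₀ : 0 ≤ C := (norm_nonneg _).trans (hC x₀)
  IsPicardLindelof.exists_eq_forall_mem_Icc_hasDerivWithinAt₀ (tmin := 0) (t₀ := ⟨0, le_rfl, hT⟩)
    (IsPicardLindelof.of_time_independent (a := ⟨C * T, by positivity⟩) (L := ⟨C, hC₀⟩)
      (fun x _ ↦ hC x) hv.lipschitzOnWith (by simp [hT]; exact le_rfl))

theorem exists_isIntegralCurveOn_Ici_of_forall_Icc (hv : LipschitzWith K v) (x₀ : E)
    (h : ∀ T, 0 ≤ T → ∃ γ : ℝ → E, γ 0 = x₀ ∧ IsIntegralCurveOn γ (fun _ ↦ v) (Icc 0 T)) :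
    ∃ γ : ℝ → E, γ 0 = x₀ ∧ IsIntegralCurveOn γ (fun _ ↦ v) (Ici 0) := by
  choose F hF0 hF using fun n : ℕ ↦ h (n + 1) (by positivity)
  have hagree : ∀ m n : ℕ, ∀ t ∈ Icc (0 : ℝ) (m + 1), t ≤ n + 1 → F m t = F n t :=
    fun m n t ht htn ↦ IsIntegralCurveOn.eqOn_Icc hv ((hF m).mono (Icc_subset_Icc_right ht.2))
      ((hF n).mono (Icc_subset_Icc_right htn)) ((hF0 m).trans (hF0 n).symm) ⟨ht.1, le_rfl⟩
  have hglue : ∀ n : ℕ, EqOn (fun t ↦ F ⌈t⌉₊ t) (F n) (Icc 0 (n + 1)) := fun n t ht ↦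
    hagree _ n t ⟨ht.1, (Nat.le_ceil t).trans (le_add_of_nonneg_right zero_le_one)⟩ ht.2
  refine ⟨fun t ↦ F ⌈t⌉₊ t, by simpa using hF0 0, fun t ht ↦ ?_⟩
  have htn : t < ⌈t⌉₊ + 1 := (Nat.le_ceil t).trans_lt (lt_add_one _)
  have hnhds : Icc (0 : ℝ) (⌈t⌉₊ + 1) ∈ 𝓝[Ici 0] t :=
    inter_mem_nhdsWithin (Ici 0) (Iic_mem_nhds htn)
  exact ((hF _ t ⟨ht, htn.le⟩).mono_of_mem_nhdsWithin hnhds).congr_of_eventuallyEq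
    (eventually_of_mem hnhds (hglue _)) rfl

theorem exists_isIntegralCurveOn_Ici [CompleteSpace E] (hv : LipschitzWith K v) {C : ℝ}
    (hC : ∀ x, ‖v x‖ ≤ C) (x₀ : E) :
    ∃ γ : ℝ → E, γ 0 = x₀ ∧ IsIntegralCurveOn γ (fun _ ↦ v) (Ici 0) :=
  exists_isIntegralCurveOn_Ici_of_forall_Icc hv x₀ fun _ ↦ exists_isIntegralCurveOn_Icc hv hC x₀

theorem eventually_slope_infDist_lt [ProperSpace E] {S : Set E} (hS : IsClosed S)
    (hne : S.Nonempty) (hv : LipschitzWith K v)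
    (htan : ∀ y ∈ S, ∀ᶠ h in 𝓝[>] (0 : ℝ), y + h • v y ∈ S)
    {γ : ℝ → E} {x : ℝ} (hγ : HasDerivWithinAt γ (v (γ x)) (Ici x) x) {r : ℝ}
    (hr : K * infDist (γ x) S < r) :
    ∀ᶠ z in 𝓝[>] x, (z - x)⁻¹ * (infDist (γ z) S - infDist (γ x) S) < r := by
  -- Compare `γ z` with `y + (z - x) • v y ∈ S`, where `y` is a point of `S` nearest to `γ x`.
  obtain ⟨y, hyS, hy⟩ := hS.exists_infDist_eq_dist hne (γ x)
  set η := r - K * infDist (γ x) S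
  have hη : 0 < η / 2 := half_pos (sub_pos.2 hr)
  have hshift : Tendsto (fun z ↦ z - x) (𝓝[>] x) (𝓝[>] 0) :=
    tendsto_nhdsWithin_iff.2 ⟨((continuous_sub_right x).tendsto' x 0 (sub_self x)).mono_left
      nhdsWithin_le_nhds, eventually_nhdsWithin_of_forall fun z hz ↦ mem_Ioi.2 (sub_pos.2 hz)⟩
  have hlin := ((hasDerivWithinAt_iff_isLittleO.1 hγ).mono
    (nhdsWithin_mono _ Ioi_subset_Ici_self)).bound hη
  filter_upwards [hshift.eventually (htan y hyS), hlin, self_mem_nhdsWithin]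
    with z hzS hz (hxz : x < z)
  have hxz : 0 < z - x := sub_pos.2 hxz
  rw [Real.norm_eq_abs, abs_of_pos hxz] at hz
  have hvy : ‖(z - x) • (v (γ x) - v y)‖ ≤ (z - x) * (K * infDist (γ x) S) := by
    rw [norm_smul, Real.norm_eq_abs, abs_of_pos hxz, hy, ← dist_eq_norm]
    exact mul_le_mul_of_nonneg_left (hv.dist_le_mul _ _) hxz.le
  have hdist : infDist (γ z) S ≤ η / 2 * (z - x) + (z - x) * (K * infDist (γ x) S) +
      infDist (γ x) S := calc
    infDist (γ z) S ≤ dist (γ z) (y + (z - x) • v y) := infDist_le_dist_of_mem hzS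
    _ = ‖(γ z - γ x - (z - x) • v (γ x)) + (z - x) • (v (γ x) - v y) + (γ x - y)‖ := by
      rw [dist_eq_norm]; congr 1; module
    _ ≤ _ := norm_add₃_le.trans (add_le_add_three hz hvy (by rw [hy, dist_eq_norm]))
  rw [inv_mul_lt_iff₀ hxz]
  nlinarith

theorem IsIntegralCurveOn.mapsTo_of_eventually_add_smul_mem [ProperSpace E] {S : Set E}
    (hS : IsClosed S) (hv : LipschitzWith K v)
    (htan : ∀ y ∈ S, ∀ᶠ h in 𝓝[>] (0 : ℝ), y + h • v y ∈ S)
    {γ : ℝ → E} (hγ : IsIntegralCurveOn γ (fun _ ↦ v) (Ici 0)) (h0 : γ 0 ∈ S) :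
    MapsTo γ (Ici 0) S := by
  intro t ht
  have hbound := le_gronwallBound_of_liminf_deriv_right_le (δ := 0) (ε := 0)
    ((continuous_infDist_pt S).comp_continuousOn (hγ.continuousOn.mono Icc_subset_Ici_self))
    (fun x hx r hr ↦ (eventually_slope_infDist_lt hS ⟨_, h0⟩ hv htan
      ((hγ x hx.1).mono (Ici_subset_Ici.2 hx.1)) hr).frequently)
    (by simp [infDist_zero_of_mem h0]) (fun _ _ ↦ (add_zero _).ge) t ⟨ht, le_rfl⟩
  rw [gronwallBound_ε0_δ0] at hbound
  exact (hS.mem_iff_infDist_zero ⟨_, h0⟩).2 (le_antisymm hbound infDist_nonneg)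

end ODE

section Simplex

theorem mem_SY_iff {A : ℕ} {y : Fin A → ℝ} : y ∈ SY A ↔ (∀ k, 0 ≤ y k) ∧ ∑ k, y k ≤ 1 :=
  ⟨fun h ↦ ⟨fun k ↦ (h.1 k).1, h.2⟩, fun ⟨h0, h1⟩ ↦
    ⟨fun k ↦ ⟨h0 k, (Finset.single_le_sum (fun j _ ↦ h0 j) (Finset.mem_univ k)).trans h1⟩, h1⟩⟩

theorem SY_subset_Icc (A : ℕ) : SY A ⊆ Icc 0 1 :=
  fun _ hy ↦ ⟨fun k ↦ (hy.1 k).1, fun k ↦ (hy.1 k).2⟩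

theorem isClosed_SY (A : ℕ) : IsClosed (SY A) := by
  simp only [SY, ofPred_and, ofPred_forall]
  exact (isClosed_iInter fun k ↦ (isClosed_le continuous_const (continuous_apply k)).inter
    (isClosed_le (continuous_apply k) continuous_const)).inter
    (isClosed_le (by fun_prop) continuous_const)

theorem eventually_nonneg_add_mul {c d : ℝ} (hc : 0 ≤ c) (hd : c = 0 → 0 ≤ d) :
    ∀ᶠ h in 𝓝[>] (0 : ℝ), 0 ≤ c + h * d := by
  rcases hc.eq_or_lt with rfl | hc
  · filter_upwards [self_mem_nhdsWithin] with h (hh : 0 < h)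
    simpa using mul_nonneg hh.le (hd rfl)
  · have : Tendsto (fun h : ℝ ↦ c + h * d) (𝓝[>] 0) (𝓝 c) :=
      ((continuous_const.add (continuous_id.mul continuous_const)).tendsto' 0 c (by simp)).mono_left
        nhdsWithin_le_nhds
    exact this.eventually (eventually_ge_nhds hc)

theorem eventually_add_smul_mem_SY {A : ℕ} {y v : Fin A → ℝ} (hy : y ∈ SY A)
    (h0 : ∀ k, y k = 0 → 0 ≤ v k) (h1 : ∑ k, y k = 1 → ∑ k, v k ≤ 0) :
    ∀ᶠ h in 𝓝[>] (0 : ℝ), y + h • v ∈ SY A := by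
  rw [mem_SY_iff] at hy
  have hcoord : ∀ᶠ h in 𝓝[>] (0 : ℝ), ∀ k, 0 ≤ y k + h * v k :=
    eventually_all.2 fun k ↦ eventually_nonneg_add_mul (hy.1 k) (h0 k)
  have hsum : ∀ᶠ h in 𝓝[>] (0 : ℝ), 0 ≤ (1 - ∑ k, y k) + h * -∑ k, v k :=
    eventually_nonneg_add_mul (by linarith [hy.2]) fun h ↦ by linarith [h1 (by linarith)]
  filter_upwards [hcoord, hsum] with h hh hs
  refine mem_SY_iff.2 ⟨hh, ?_⟩
  simp only [Pi.add_apply, Pi.smul_apply, smul_eq_mul, Finset.sum_add_distrib, ← Finset.mul_sum]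
  linarith

end Simplex

section UnitCube

variable {ι : Type*}

noncomputable def projUnitCube (x : ι → ℝ) : ι → ℝ := fun k ↦ projIcc 0 1 zero_le_one (x k)

theorem lipschitzWith_projUnitCube [Fintype ι] :
    LipschitzWith 1 (projUnitCube : (ι → ℝ) → ι → ℝ) :=
  LipschitzWith.of_dist_le_mul fun x y ↦ (dist_pi_le_iff (by positivity)).2 fun k ↦
    ((LipschitzWith.projIcc zero_le_one).dist_le_mul _ _).trans
      (by simpa using dist_le_pi_dist x y k)

theorem projUnitCube_mem_Icc (x : ι → ℝ) : projUnitCube x ∈ Icc 0 1 :=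
  ⟨fun k ↦ (projIcc 0 1 zero_le_one (x k)).2.1, fun k ↦ (projIcc 0 1 zero_le_one (x k)).2.2⟩

theorem projUnitCube_of_mem {x : ι → ℝ} (hx : x ∈ Icc 0 1) : projUnitCube x = x :=
  funext fun k ↦ congrArg Subtype.val (projIcc_of_mem zero_le_one ⟨hx.1 k, hx.2 k⟩)

end UnitCube

theorem slowPhase_ODE_wellPosed_general (A : ℕ) (K : ℝ)
    (b : (Fin A → ℝ) → (Fin A → ℝ)) (hLip : LipschitzWith K.toNNReal b)
    (hb0 : ∀ y ∈ SY A, ∀ k, y k = 0 → 0 ≤ b y k)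
    (hb1 : ∀ y ∈ SY A, (∑ k, y k) = 1 → (∑ k, b y k) ≤ 0)
    (y₀ : Fin A → ℝ) (hy₀ : y₀ ∈ SY A) :
    (∃ Y : ℝ → (Fin A → ℝ), Y 0 = y₀ ∧ (∀ t, 0 ≤ t → Y t ∈ SY A) ∧
        ∀ t, 0 ≤ t → HasDerivWithinAt Y (b (Y t)) (Set.Ici 0) t) ∧
    ∀ Y₁ Y₂ : ℝ → (Fin A → ℝ),
      (Y₁ 0 = y₀ ∧ (∀ t, 0 ≤ t → Y₁ t ∈ SY A) ∧
        ∀ t, 0 ≤ t → HasDerivWithinAt Y₁ (b (Y₁ t)) (Set.Ici 0) t) →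
      (Y₂ 0 = y₀ ∧ (∀ t, 0 ≤ t → Y₂ t ∈ SY A) ∧
        ∀ t, 0 ≤ t → HasDerivWithinAt Y₂ (b (Y₂ t)) (Set.Ici 0) t) →
      ∀ t, 0 ≤ t → Y₁ t = Y₂ t := by
  set v := b ∘ projUnitCube
  have hv : LipschitzWith (K.toNNReal * 1) v := hLip.comp lipschitzWith_projUnitCube
  have hvb : ∀ y ∈ SY A, v y = b y := fun y hy ↦
    congrArg b (projUnitCube_of_mem (SY_subset_Icc A hy))
  obtain ⟨C, hC⟩ := (isCompact_Icc (a := (0 : Fin A → ℝ)) (b := 1)).exists_bound_of_continuousOn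
    hLip.continuous.continuousOn
  obtain ⟨Y, hY0, hY⟩ := exists_isIntegralCurveOn_Ici hv (fun x ↦ hC _ (projUnitCube_mem_Icc x)) y₀
  have hYS : MapsTo Y (Ici 0) (SY A) :=
    hY.mapsTo_of_eventually_add_smul_mem (isClosed_SY A) hv
      (fun y hy ↦ hvb y hy ▸ eventually_add_smul_mem_SY hy (hb0 y hy) (hb1 y hy)) (hY0 ▸ hy₀)
  refine ⟨⟨Y, hY0, hYS, fun t ht ↦ hvb _ (hYS ht) ▸ hY t ht⟩, ?_⟩
  rintro Y₁ Y₂ ⟨hY₁0, -, hY₁⟩ ⟨hY₂0, -, hY₂⟩ t ht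
  exact IsIntegralCurveOn.eqOn_Ici hLip hY₁ hY₂ (hY₁0.trans hY₂0.symm) ht

/-- the ODE system `dY_k/dt = b_k(Y(t))` with Lipschitz drift `b`
satisfying the inward-pointing boundary conditions on `S_Y` has, for every initial
condition `y₀ ∈ S_Y`, a solution staying in `S_Y` for all `t ≥ 0`; moreover any
two such solutions agree on `[0,∞)`. -/
theorem slowPhase_ODE_wellPosed (A : ℕ) (hA : 1 ≤ A) (K : ℝ) (hK : 0 ≤ K)
    (b : (Fin A → ℝ) → (Fin A → ℝ)) (hLip : LipschitzWith K.toNNReal b)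
    (hb0 : ∀ y ∈ SY A, ∀ k, y k = 0 → 0 ≤ b y k)
    (hb1 : ∀ y ∈ SY A, (∑ k, y k) = 1 → (∑ k, b y k) ≤ 0)
    (y₀ : Fin A → ℝ) (hy₀ : y₀ ∈ SY A) :
    (∃ Y : ℝ → (Fin A → ℝ), Y 0 = y₀ ∧ (∀ t, 0 ≤ t → Y t ∈ SY A) ∧
        ∀ t, 0 ≤ t → HasDerivWithinAt Y (b (Y t)) (Set.Ici 0) t) ∧
    ∀ Y₁ Y₂ : ℝ → (Fin A → ℝ),
      (Y₁ 0 = y₀ ∧ (∀ t, 0 ≤ t → Y₁ t ∈ SY A) ∧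
        ∀ t, 0 ≤ t → HasDerivWithinAt Y₁ (b (Y₁ t)) (Set.Ici 0) t) →
      (Y₂ 0 = y₀ ∧ (∀ t, 0 ≤ t → Y₂ t ∈ SY A) ∧
        ∀ t, 0 ≤ t → HasDerivWithinAt Y₂ (b (Y₂ t)) (Set.Ici 0) t) →
      ∀ t, 0 ≤ t → Y₁ t = Y₂ t :=
  slowPhase_ODE_wellPosed_general A K b hLip hb0 hb1 y₀ hy₀
end

section
/- Let γ, θ ∈ ℝ, let m, n ∈ ℕ with m ≥ 2 and n ≥ 2, and let x : ℕ → ℝ be summable with 0 ≤ x_i for all i and ∑'_i x_i ≤ 1. Then ∑'_i x_i·(γ − x_i)·(m(m−1)x_i^{m−2}·φ_n(x) + n(n−1)x_i^{n−2}·φ_m(x) + 2mn·x_i^{m+n−2}) − ∑'_i ∑'_j [i ≠ j]·x_i·x_j·mn·(x_i^{m−1}x_j^{n−1} + x_i^{n−1}x_j^{m−1}) − θ·∑'_i x_i·(m·x_i^{m−1}·φ_n(x) + n·x_i^{n−1}·φ_m(x)) = γ·(m(m−1)·φ_{m−1}(x)·φ_n(x) + n(n−1)·φ_m(x)·φ_{n−1}(x)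 + 2mn·φ_{m+n−1}(x)) − (m(m−1) + n(n−1) + 2mn + (m+n)θ)·φ_m(x)·φ_n(x). -/
/-- The power sum `φ_p(x) = ∑'_i x_i^p`. -/
noncomputable def phi (p : ℕ) (x : ℕ → ℝ) : ℝ := ∑' i, x i ^ p

/-- the closed form of the Poisson–Dirichlet generator
`𝒜_{γ,θ}` applied to the product of power sums `φ_m · φ_n`:
`𝒜_{γ,θ}(φ_m φ_n) = γ g^{(m,n)} − a(θ,(m,n)) φ_m φ_n`. -/
theorem generator_on_phi_mul_phi (γ θ : ℝ) (m n : ℕ) (hm : 2 ≤ m) (hn : 2 ≤ n)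
    (x : ℕ → ℝ) (hsum : Summable x) (hx0 : ∀ i, 0 ≤ x i) (hx1 : (∑' i, x i) ≤ 1) :
    (∑' i, x i * (γ - x i) *
        ((m : ℝ) * ((m : ℝ) - 1) * x i ^ (m - 2) * phi n x
          + (n : ℝ) * ((n : ℝ) - 1) * x i ^ (n - 2) * phi m x
          + 2 * (m : ℝ) * (n : ℝ) * x i ^ (m + n - 2)))
      - (∑' i, ∑' j, (if i ≠ j then (1 : ℝ) else 0) * x i * x j * ((m : ℝ) * (n : ℝ)) *
            (x i ^ (m - 1) * x j ^ (n - 1) + x i ^ (n - 1) * x j ^ (m - 1)))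
      - θ * ∑' i, x i * ((m : ℝ) * x i ^ (m - 1) * phi n x + (n : ℝ) * x i ^ (n - 1) * phi m x)
    = γ * ((m : ℝ) * ((m : ℝ) - 1) * phi (m - 1) x * phi n x
          + (n : ℝ) * ((n : ℝ) - 1) * phi m x * phi (n - 1) x
          + 2 * (m : ℝ) * (n : ℝ) * phi (m + n - 1) x)
      - ((m : ℝ) * ((m : ℝ) - 1) + (n : ℝ) * ((n : ℝ) - 1) + 2 * (m : ℝ) * (n : ℝ)
          + ((m : ℝ) + (n : ℝ)) * θ) * (phi m x * phi n x) := by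
  obtain ⟨a, rfl⟩ := Nat.exists_eq_add_of_le hm
  obtain ⟨b, rfl⟩ := Nat.exists_eq_add_of_le hn
  simp only [show 2+a-2 = a from by omega, show 2+a-1 = a+1 from by omega,
    show 2+b-2 = b from by omega, show 2+b-1 = b+1 from by omega,
    show 2+a+(2+b)-2 = a+b+2 from by omega, show 2+a+(2+b)-1 = a+b+3 from by omega]
  simp only [show 2+a = a+2 from by omega, show 2+b = b+2 from by omega, phi]
  have hxle : ∀ i, x i ≤ 1 := fun i => le_trans (Summable.le_tsum hsum i fun j _ => hx0 j) hx1
  have hS : ∀ p : ℕ, 1 ≤ p → Summable (fun i => x i ^ p) := by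
    intro p hp
    refine hsum.of_nonneg_of_le (fun i => pow_nonneg (hx0 i) _) (fun i => ?_)
    calc x i ^ p ≤ x i ^ 1 := pow_le_pow_of_le_one (hx0 i) (hxle i) hp
      _ = x i := pow_one _
  have H : ∀ (c : ℝ) (p : ℕ), 1 ≤ p →
      HasSum (fun i => c * x i ^ p) (c * ∑' i, x i ^ p) :=
    fun c p hp => ((hS p hp).hasSum.mul_left c)
  set A : ℝ := (↑(a + 2) : ℝ) * ((↑(a + 2) : ℝ) - 1) with hA
  set B : ℝ := (↑(b + 2) : ℝ) * ((↑(b + 2) : ℝ) - 1) with hB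
  set M : ℝ := (↑(a + 2) : ℝ) * (↑(b + 2) : ℝ) with hM
  set Sn : ℝ := ∑' (i : ℕ), x i ^ (b + 2) with hSn
  set Sm : ℝ := ∑' (i : ℕ), x i ^ (a + 2) with hSm
  have E1 : ∑' (i : ℕ), x i * (γ - x i) *
      (A * x i ^ a * Sn + B * x i ^ b * Sm + 2 * (↑(a + 2) : ℝ) * (↑(b + 2) : ℝ) * x i ^ (a + b + 2))
      = A * Sn * γ * (∑' i, x i ^ (a+1)) + ((-(A * Sn)) * Sm +
        ((B * Sm * γ) * (∑' i, x i ^ (b+1)) + ((-(B * Sm)) * Sn +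
          ((2 * M * γ) * (∑' i, x i ^ (a+b+3)) + (-(2*M)) * (∑' i, x i ^ (a+b+4)))))) := by
    have hpt : ∀ i, x i * (γ - x i) *
        (A * x i ^ a * Sn + B * x i ^ b * Sm + 2 * (↑(a + 2) : ℝ) * (↑(b + 2) : ℝ) * x i ^ (a + b + 2))
        = (A * Sn * γ) * x i ^ (a+1) + ((-(A * Sn)) * x i ^ (a+2) +
          ((B * Sm * γ) * x i ^ (b+1) + ((-(B * Sm)) * x i ^ (b+2) +
            ((2 * M * γ) * x i ^ (a+b+3) + (-(2*M)) * x i ^ (a+b+4))))) := by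
      intro i; rw [hM]; ring
    rw [tsum_congr hpt, hSm, hSn]
    exact ((H _ _ (by omega)).add ((H _ _ (by omega)).add ((H _ _ (by omega)).add
      ((H _ _ (by omega)).add ((H _ _ (by omega)).add (H _ _ (by omega))))))).tsum_eq
  have hinner : ∀ i : ℕ, (∑' (j : ℕ), (if i ≠ j then (1:ℝ) else 0) * x i * x j * M *
        (x i ^ (a + 1) * x j ^ (b + 1) + x i ^ (b + 1) * x j ^ (a + 1)))
      = (M * x i ^ (a+2)) * Sn + (M * x i ^ (b+2)) * Sm - 2 * M * x i ^ (a+b+4) := by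
    intro i
    have hpt : ∀ j, (if i ≠ j then (1:ℝ) else 0) * x i * x j * M *
        (x i ^ (a + 1) * x j ^ (b + 1) + x i ^ (b + 1) * x j ^ (a + 1))
        = ((M * x i ^ (a+2)) * x j ^ (b+2) + (M * x i ^ (b+2)) * x j ^ (a+2))
          - (if j = i then 2 * M * x i ^ (a+b+4) else 0) := by
      intro j
      rcases eq_or_ne i j with rfl | h
      · rw [if_neg (by simp), if_pos rfl]; ring
      · rw [if_pos h, if_neg (Ne.symm h)]; ring
    rw [tsum_congr hpt, hSm, hSn]
    exact (((H (M * x i ^ (a+2)) (b+2) (by omega)).add (H (M * x i ^ (b+2)) (a+2) (by omega))).sub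
      (hasSum_ite_eq i (2 * M * x i ^ (a+b+4)))).tsum_eq
  have E2 : ∑' (i : ℕ) (j : ℕ), (if i ≠ j then (1:ℝ) else 0) * x i * x j * M *
        (x i ^ (a + 1) * x j ^ (b + 1) + x i ^ (b + 1) * x j ^ (a + 1))
      = (M * Sn) * Sm + ((M * Sm) * Sn + (-(2*M)) * (∑' i, x i ^ (a+b+4))) := by
    rw [tsum_congr hinner]
    have hpt2 : ∀ i : ℕ, (M * x i ^ (a+2)) * Sn + (M * x i ^ (b+2)) * Sm - 2 * M * x i ^ (a+b+4)
        = (M * Sn) * x i ^ (a+2) + ((M * Sm) * x i ^ (b+2) + (-(2*M)) * x i ^ (a+b+4)) := by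
      intro i; ring
    rw [tsum_congr hpt2, hSm]
    exact ((H _ _ (by omega)).add ((H _ _ (by omega)).add (H _ _ (by omega)))).tsum_eq
  have E3 : ∑' (i : ℕ), x i * ((↑(a + 2) : ℝ) * x i ^ (a + 1) * Sn + (↑(b + 2) : ℝ) * x i ^ (b + 1) * Sm)
      = ((↑(a + 2) : ℝ) * Sn) * Sm + ((↑(b + 2) : ℝ) * Sm) * Sn := by
    have hpt3 : ∀ i : ℕ, x i * ((↑(a + 2) : ℝ) * x i ^ (a + 1) * Sn + (↑(b + 2) : ℝ) * x i ^ (b + 1) * Sm)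
        = ((↑(a + 2) : ℝ) * Sn) * x i ^ (a+2) + ((↑(b + 2) : ℝ) * Sm) * x i ^ (b+2) := by
      intro i; ring
    rw [tsum_congr hpt3, hSm, hSn]
    exact ((H _ _ (by omega)).add (H _ _ (by omega))).tsum_eq
  rw [E1, E2, E3, hA, hB, hM]
  push_cast
  ring
end

section
/- Let Θ > 0 and ρ > 0 be reals with ρ ≠ 1/2, and define g : ℝ → ℝ by g(t) := (1 − 2ρ)/(exp(Θ(1 − 2ρ)t) − 2ρ). Then g(0) = 1; for every t ≥ 0 the denominator exp(Θ(1−2ρ)t) − 2ρ is nonzero and 0 < g(t) ≤ 1; and g is differentiable at every t ≥ 0 with g'(t) = Θ·g(t)·(2ρ − 1 − 2ρ·g(t)). -/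
/-! The function `g` is `a / (exp (κ a t) - b)` with `κ = Θ`, `a = 1 - 2ρ`, `b = 2ρ`: since its
reciprocal is `(exp (κ a t) - b) / a`, a shifted exponential, `g` solves the logistic equation
`g' = -κ g (a + b g)`. With `a + b = 1` the denominator is `a + (exp (κ a t) - 1)`, and for
`κ t ≥ 0` the exponent `κ a t` has the sign of `a`, so the second summand has that sign too; hence
the denominator has the sign of `a` and at least its size, which pins `g t` in `(0, 1]`. -/

open Real

noncomputable def logisticCurve (κ a b t : ℝ) : ℝ := a / (exp (κ * a * t) - b)

lemma mul_exp_mul_sub_one_nonneg {c : ℝ} (hc : 0 ≤ c) (a : ℝ) : 0 ≤ a * (exp (c * a) - 1) := by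
  rcases le_total 0 a with ha | ha
  · exact mul_nonneg ha (sub_nonneg.2 (one_le_exp (mul_nonneg hc ha)))
  · exact mul_nonneg_of_nonpos_of_nonpos ha
      (sub_nonpos.2 (exp_le_one_iff.2 (mul_nonpos_of_nonneg_of_nonpos hc ha)))

lemma div_mem_Ioc_of_sq_le_mul {a d : ℝ} (ha : a ≠ 0) (h : a ^ 2 ≤ a * d) :
    d ≠ 0 ∧ 0 < a / d ∧ a / d ≤ 1 := by
  have had : 0 < a * d := (by positivity : (0:ℝ) < a ^ 2).trans_le h
  have hd : d ≠ 0 := right_ne_zero_of_mul had.ne'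
  have hdiv : a / d = a ^ 2 / (a * d) := by rw [sq, mul_div_mul_left _ _ ha]
  exact ⟨hd, hdiv ▸ div_pos (by positivity) had, hdiv ▸ div_le_one_of_le₀ h had.le⟩

section

variable {κ a b : ℝ}

lemma logisticCurve_zero (ha : a ≠ 0) (hab : a + b = 1) : logisticCurve κ a b 0 = 1 := by
  rw [logisticCurve, mul_zero, exp_zero, show 1 - b = a by linarith, div_self ha]

lemma logisticCurve_mem_Ioc (hκ : 0 ≤ κ) (ha : a ≠ 0) (hab : a + b = 1) {t : ℝ} (ht : 0 ≤ t) :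
    exp (κ * a * t) - b ≠ 0 ∧ 0 < logisticCurve κ a b t ∧ logisticCurve κ a b t ≤ 1 := by
  apply div_mem_Ioc_of_sq_le_mul ha
  have := mul_exp_mul_sub_one_nonneg (mul_nonneg hκ ht) a
  rw [show κ * t * a = κ * a * t by ring] at this
  obtain rfl : b = 1 - a := by linarith
  linarith [show a * (exp (κ * a * t) - (1 - a)) = a ^ 2 + a * (exp (κ * a * t) - 1) by ring]

lemma hasDerivAt_logisticCurve {t : ℝ} (hd : exp (κ * a * t) - b ≠ 0) :
    HasDerivAt (logisticCurve κ a b)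
      (-κ * logisticCurve κ a b t * (a + b * logisticCurve κ a b t)) t := by
  have hexp : HasDerivAt (fun s ↦ exp (κ * a * s) - b) (exp (κ * a * t) * (κ * a * 1)) t :=
    ((hasDerivAt_id t).const_mul (κ * a)).exp.sub_const b
  refine ((hasDerivAt_const t a).div hexp hd).congr_deriv ?_
  simp only [logisticCurve]
  field_simp
  ring

end

theorem fastPhaseMass_explicit_general (Θ ρ : ℝ) (hΘ : 0 < Θ) (hρc : ρ ≠ 1 / 2) :
    let g : ℝ → ℝ := fun t => (1 - 2 * ρ) / (Real.exp (Θ * (1 - 2 * ρ) * t) - 2 * ρ)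
    g 0 = 1 ∧
    (∀ t, 0 ≤ t → Real.exp (Θ * (1 - 2 * ρ) * t) - 2 * ρ ≠ 0 ∧ 0 < g t ∧ g t ≤ 1) ∧
    (∀ t, 0 ≤ t → HasDerivAt g (Θ * g t * (2 * ρ - 1 - 2 * ρ * g t)) t) := by
  intro g
  have ha : 1 - 2 * ρ ≠ 0 := fun h ↦ hρc (by linarith)
  have hab : 1 - 2 * ρ + 2 * ρ = 1 := by ring
  have hbounds (t : ℝ) (ht : 0 ≤ t) := logisticCurve_mem_Ioc hΘ.le ha hab ht
  refine ⟨logisticCurve_zero ha hab, hbounds, fun t ht ↦ ?_⟩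
  refine (hasDerivAt_logisticCurve (hbounds t ht).1).congr_deriv ?_
  simp only [g, logisticCurve]
  ring

/-- the explicit solution `g(t) = (1−2ρ)/(e^{Θ(1−2ρ)t} − 2ρ)` of the
fast-phase mass ODE for the inclusion process with `A = 1`: it starts at `1`,
stays in `(0,1]` (with nonvanishing denominator) for `t ≥ 0`, and solves
`g' = Θ g (2ρ − 1 − 2ρ g)`. -/
theorem fastPhaseMass_explicit (Θ ρ : ℝ) (hΘ : 0 < Θ) (hρ : 0 < ρ) (hρc : ρ ≠ 1 / 2) :
    let g : ℝ → ℝ := fun t => (1 - 2 * ρ) / (Real.exp (Θ * (1 - 2 * ρ) * t) - 2 * ρ)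
    g 0 = 1 ∧
    (∀ t, 0 ≤ t → Real.exp (Θ * (1 - 2 * ρ) * t) - 2 * ρ ≠ 0 ∧ 0 < g t ∧ g t ≤ 1) ∧
    (∀ t, 0 ≤ t → HasDerivAt g (Θ * g t * (2 * ρ - 1 - 2 * ρ * g t)) t) :=
  fastPhaseMass_explicit_general Θ ρ hΘ hρc
end

section
/- For every δ ∈ (0,1) there exist a real c'' > 0 (one may take c'' = 4ρ·(max_{0≤k≤A} r_k + 1)) and L₀ ∈ ℕ such that for all L ≥ L₀ and every configuration η : Fin L → ℕ with ∑_i η_i = N_L, η_1 ≤ A and γ_N(η) > δ, one has c_L(η) ≤ c''. -/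
/-!
Put `K := max_{k ≤ A} r_k + C`. For `L ≥ 1` every slow-phase rate is at most `K / L`, and a
fast-phase rate at `m` is at most `m - A + ζ_L ≤ m + K / L`. Summing over the sites gives
`∑_{j ≥ 2} u(η_j) ≤ K + N_L`, while `η₁ ≤ A` bounds both prefactors `u(η₁)` by `K / L`.
Hence `c_L(η) ≤ 2 K (K + N_L) / L → 2 K ρ`, which is eventually below `4 ρ K`.
-/

/-- Relative mass in the fast phase: `γ_N(η) = (1/N)·∑_i (η_i − A)₊`. -/
noncomputable def gammaN (N A : ℕ) {L : ℕ} (η : Fin L → ℕ) : ℝ :=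
  (1 / (N : ℝ)) * ∑ i, max ((η i : ℝ) - (A : ℝ)) 0

/-- Total jump rate of site 1:
`c(η) = u₁(η₁)·∑_{j≥2} u₂(η_j) + u₂(η₁)·∑_{j≥2} u₁(η_j)`. -/
noncomputable def cRate (u₁ u₂ : ℕ → ℝ) {L : ℕ} (hL : 0 < L) (η : Fin L → ℕ) : ℝ :=
  u₁ (η ⟨0, hL⟩) * (∑ j ∈ Finset.univ.erase (⟨0, hL⟩ : Fin L), u₂ (η j))
    + u₂ (η ⟨0, hL⟩) * (∑ j ∈ Finset.univ.erase (⟨0, hL⟩ : Fin L), u₁ (η j))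

open Finset Filter Topology

lemma eventually_add_div_lt {N : ℕ → ℕ} {ρ c : ℝ}
    (hN : Tendsto (fun L => (N L : ℝ) / L) atTop (𝓝 ρ)) (hρc : ρ < c) (K : ℝ) :
    ∀ᶠ L : ℕ in atTop, (K + N L) / L < c := by
  have h : Tendsto (fun L : ℕ => (K + N L) / L) atTop (𝓝 ρ) := by
    simpa [add_div] using (tendsto_const_div_atTop_nhds_zero_nat K).add hN
  exact h.eventually_lt_const hρc

lemma le_div_add_of_slow_fast {u : ℕ → ℝ} {A : ℕ} {L K ε : ℝ} (hL : 0 < L)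
    (hε : ε ≤ K / L) (hslow : ∀ k ≤ A, u k * L ≤ K)
    (hfast : ∀ m, A < m → |u m - ((m : ℝ) - A)| ≤ ε) (m : ℕ) :
    u m ≤ K / L + m := by
  rcases le_or_gt m A with hm | hm
  · linarith [(le_div_iff₀ hL).2 (hslow m hm), (Nat.cast_nonneg m : (0 : ℝ) ≤ m)]
  · linarith [(abs_le.mp (hfast m hm)).2, (Nat.cast_nonneg A : (0 : ℝ) ≤ A)]

lemma sum_erase_le_of_le_add {L : ℕ} {u : ℕ → ℝ} {s : ℝ} (hs : 0 ≤ s)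
    (hu : ∀ m, u m ≤ s + m) (η : Fin L → ℕ) (i : Fin L) :
    ∑ j ∈ univ.erase i, u (η j) ≤ L * s + ∑ j, (η j : ℝ) :=
  calc ∑ j ∈ univ.erase i, u (η j)
      ≤ ∑ j ∈ univ.erase i, (s + η j) := sum_le_sum fun j _ => hu (η j)
    _ ≤ ∑ j, (s + η j) :=
        sum_le_sum_of_subset_of_nonneg (erase_subset _ _) fun j _ _ => by positivity
    _ = L * s + ∑ j, (η j : ℝ) := by simp [sum_add_distrib]

lemma cRate_le {u₁ u₂ : ℕ → ℝ} {L : ℕ} (hL : 0 < L) (η : Fin L → ℕ) {s : ℝ} (hs : 0 ≤ s)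
    (hu₁ : ∀ m, u₁ m ≤ s + m) (hu₂ : ∀ m, u₂ m ≤ s + m)
    (h₁ : 0 ≤ u₁ (η ⟨0, hL⟩)) (h₂ : 0 ≤ u₂ (η ⟨0, hL⟩))
    (hη₁ : u₁ (η ⟨0, hL⟩) ≤ s) (hη₂ : u₂ (η ⟨0, hL⟩) ≤ s) :
    cRate u₁ u₂ hL η ≤ 2 * s * (L * s + ∑ j, (η j : ℝ)) := by
  have hT : 0 ≤ L * s + ∑ j, (η j : ℝ) := by positivity
  have e₁ := (mul_le_mul_of_nonneg_left (sum_erase_le_of_le_add hs hu₂ η ⟨0, hL⟩) h₁).trans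
    (mul_le_mul_of_nonneg_right hη₁ hT)
  have e₂ := (mul_le_mul_of_nonneg_left (sum_erase_le_of_le_add hs hu₁ η ⟨0, hL⟩) h₂).trans
    (mul_le_mul_of_nonneg_right hη₂ hT)
  rw [cRate]
  linarith

theorem cRate_upper_bound_general
    (A : ℕ) (ρ : ℝ) (hρ : 0 < ρ)
    (q r : ℕ → ℝ)
    (hqr : ∀ k, 1 ≤ k → k ≤ A → q k ≤ r k) (hr0 : 0 < r 0)
    (N : ℕ → ℕ) (hN : Filter.Tendsto (fun L => (N L : ℝ) / (L : ℝ)) Filter.atTop (nhds ρ))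
    (C : ℝ) (hC : 0 ≤ C) (ζ : ℕ → ℝ) (hζC : ∀ L, ζ L ≤ C / (L : ℝ))
    (u₁ u₂ : ℕ → ℕ → ℝ) (hu₁nn : ∀ L m, 0 ≤ u₁ L m) (hu₂nn : ∀ L m, 0 ≤ u₂ L m)
    (hu₁0 : ∀ L, u₁ L 0 = 0)
    (hu₁slow : ∀ L k, 1 ≤ k → k ≤ A → |u₁ L k * (L : ℝ) - q k| ≤ ζ L)
    (hu₂slow : ∀ L k, k ≤ A → |u₂ L k * (L : ℝ) - r k| ≤ ζ L)
    (hu₁fast : ∀ L m, A < m → |u₁ L m - ((m : ℝ) - (A : ℝ))| ≤ ζ L)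
    (hu₂fast : ∀ L m, A < m → |u₂ L m - ((m : ℝ) - (A : ℝ))| ≤ ζ L)
    (δ : ℝ) :
    ∃ c'' : ℝ, 0 < c'' ∧ ∃ L₀ : ℕ, ∀ L, L₀ ≤ L → ∀ (hL : 0 < L) (η : Fin L → ℕ),
      (∑ i, η i = N L) → η ⟨0, hL⟩ ≤ A → δ < gammaN (N L) A η →
      cRate (u₁ L) (u₂ L) hL η ≤ c'' := by
  set M := (Iic A).sup' nonempty_Iic r
  have hMr : ∀ k ≤ A, r k ≤ M := fun k hk => le_sup' r (mem_Iic.mpr hk)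
  have hM : 0 < M := hr0.trans_le (hMr 0 (Nat.zero_le A))
  set K := M + C
  have hK : 0 < K := by positivity
  obtain ⟨L₀, hL₀⟩ := eventually_atTop.mp (eventually_add_div_lt hN (by linarith : ρ < 2 * ρ) K)
  refine ⟨4 * ρ * K, by positivity, L₀, fun L hLL₀ hL η hsum hη₀ _ => ?_⟩
  have hLpos : (0 : ℝ) < L := by exact_mod_cast hL
  have hζ : ζ L ≤ C := (hζC L).trans (div_le_self hC (by exact_mod_cast hL))
  have hε : ζ L ≤ K / L := (hζC L).trans (by gcongr; linarith)
  have hslow₁ : ∀ k ≤ A, u₁ L k * L ≤ K := by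
    intro k hk
    rcases Nat.eq_zero_or_pos k with rfl | hk1
    · simp [hu₁0, hK.le]
    · linarith [(abs_le.mp (hu₁slow L k hk1 hk)).2, hqr k hk1 hk, hMr k hk]
  have hslow₂ : ∀ k ≤ A, u₂ L k * L ≤ K := fun k hk => by
    linarith [(abs_le.mp (hu₂slow L k hk)).2, hMr k hk]
  calc cRate (u₁ L) (u₂ L) hL η
      ≤ 2 * (K / L) * (L * (K / L) + ∑ j, (η j : ℝ)) :=
        cRate_le hL η (by positivity) (le_div_add_of_slow_fast hLpos hε hslow₁ (hu₁fast L))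
          (le_div_add_of_slow_fast hLpos hε hslow₂ (hu₂fast L)) (hu₁nn L _) (hu₂nn L _)
          ((le_div_iff₀ hLpos).2 (hslow₁ _ hη₀)) ((le_div_iff₀ hLpos).2 (hslow₂ _ hη₀))
    _ = 2 * K * ((K + N L) / L) := by
        rw [← Nat.cast_sum, hsum]
        field_simp
    _ ≤ 2 * K * (2 * ρ) := by gcongr; exact (hL₀ L hLL₀).le
    _ = 4 * ρ * K := by ring

/-- under Assumption 1.2, for every `δ ∈ (0,1)` there are a constant
`c'' > 0` and `L₀` such that for all `L ≥ L₀` and all configurations `η` with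
`∑η = N_L`, `η₁ ≤ A` and `γ_N(η) > δ`, the total jump rate of site 1 satisfies
`c_L(η) ≤ c''`. -/
theorem cRate_upper_bound
    (A : ℕ) (ρ : ℝ) (hρ : 0 < ρ)
    (q r : ℕ → ℝ) (hq0 : q 0 = 0)
    (hqpos : ∀ k, 1 ≤ k → k ≤ A → 0 < q k)
    (hqr : ∀ k, 1 ≤ k → k ≤ A → q k ≤ r k) (hr0 : 0 < r 0)
    (N : ℕ → ℕ) (hN : Filter.Tendsto (fun L => (N L : ℝ) / (L : ℝ)) Filter.atTop (nhds ρ))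
    (C : ℝ) (hC : 0 ≤ C) (ζ : ℕ → ℝ) (hζ0 : ∀ L, 0 ≤ ζ L) (hζC : ∀ L, ζ L ≤ C / (L : ℝ))
    (u₁ u₂ : ℕ → ℕ → ℝ) (hu₁nn : ∀ L m, 0 ≤ u₁ L m) (hu₂nn : ∀ L m, 0 ≤ u₂ L m)
    (hu₁0 : ∀ L, u₁ L 0 = 0)
    (hu₁slow : ∀ L k, 1 ≤ k → k ≤ A → |u₁ L k * (L : ℝ) - q k| ≤ ζ L)
    (hu₂slow : ∀ L k, k ≤ A → |u₂ L k * (L : ℝ) - r k| ≤ ζ L)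
    (hu₁fast : ∀ L m, A < m → |u₁ L m - ((m : ℝ) - (A : ℝ))| ≤ ζ L)
    (hu₂fast : ∀ L m, A < m → |u₂ L m - ((m : ℝ) - (A : ℝ))| ≤ ζ L)
    (δ : ℝ) (hδ : δ ∈ Set.Ioo (0 : ℝ) 1) :
    ∃ c'' : ℝ, 0 < c'' ∧ ∃ L₀ : ℕ, ∀ L, L₀ ≤ L → ∀ (hL : 0 < L) (η : Fin L → ℕ),
      (∑ i, η i = N L) → η ⟨0, hL⟩ ≤ A → δ < gammaN (N L) A η →
      cRate (u₁ L) (u₂ L) hL η ≤ c'' :=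
  cRate_upper_bound_general A ρ hρ q r hqr hr0 N hN C hC ζ hζC u₁ u₂ hu₁nn hu₂nn hu₁0 hu₁slow
    hu₂slow hu₁fast hu₂fast δ
end

section
/- Let β ∈ ℝ and let x : ℕ → ℝ be summable with 0 ≤ x_i ≤ 1 for all i and ∑'_i x_i ≤ 1. For real s ≥ 1 write φ_s(x) := ∑'_i x_i^s (with 0^s := 0). Then, as the real parameter m tends to 2 from the right, the quantity 2 − 2(1+β)·φ_2(x) − m(m−1)·φ_{m−1}(x) + m(m−1+β)·φ_m(x) converges to 2·(1 − ∑'_i x_i). -/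
/-- The power sum with real exponent: `φ_s(x) = ∑'_i x_i^s` (real power, `0^s = 0`
for `s > 0`). -/
noncomputable def phiR (s : ℝ) (x : ℕ → ℝ) : ℝ := ∑' i, x i ^ s

/-! Each `s ↦ x_i ^ s` is continuous on `s ≥ 1` and bounded there by `x_i`, so by dominated
convergence `φ_s(x)` is continuous in `s ∈ [1, ∞)`. The expression is therefore continuous at
`m = 2` from the right, where it equals `2 − 2(1+β)φ₂ − 2φ₁ + 2(1+β)φ₂ = 2(1 − φ₁)`. -/

open Filter Set Topology

lemma phiR_one (x : ℕ → ℝ) : phiR 1 x = ∑' i, x i := by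
  simp only [phiR, Real.rpow_one]

lemma continuousWithinAt_phiR {x : ℕ → ℝ} (hsum : Summable x) (hx0 : ∀ i, 0 ≤ x i)
    (hx1 : ∀ i, x i ≤ 1) {s₀ : ℝ} (hs₀ : 1 ≤ s₀) :
    ContinuousWithinAt (fun s => phiR s x) (Ici 1) s₀ := by
  refine tendsto_tsum_of_dominated_convergence (bound := x) hsum (fun i => ?_) ?_
  · exact (Real.continuousAt_const_rpow' (by linarith)).continuousWithinAt
  · filter_upwards [self_mem_nhdsWithin] with s (hs : 1 ≤ s) i
    rw [Real.norm_of_nonneg (Real.rpow_nonneg (hx0 i) s)]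
    exact Real.rpow_le_self_of_le_one (hx0 i) (hx1 i) hs

theorem generator_phi2_sub_phim_limit_general (β : ℝ) (x : ℕ → ℝ) (hsum : Summable x)
    (hx0 : ∀ i, 0 ≤ x i) (hx1 : ∀ i, x i ≤ 1) :
    Filter.Tendsto
      (fun m : ℝ =>
        2 - 2 * (1 + β) * phiR 2 x - m * (m - 1) * phiR (m - 1) x
          + m * (m - 1 + β) * phiR m x)
      (nhdsWithin 2 (Set.Ioi 2)) (nhds (2 * (1 - ∑' i, x i))) := by
  have hφ : ∀ s₀, 1 ≤ s₀ → ContinuousWithinAt (fun s => phiR s x) (Ici 1) s₀ :=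
    fun _ => continuousWithinAt_phiR hsum hx0 hx1
  have hsub : ContinuousWithinAt (fun m : ℝ => m - 1) (Ioi 2) 2 :=
    continuousWithinAt_id.sub continuousWithinAt_const
  have hφ_sub : ContinuousWithinAt (fun m : ℝ => phiR (m - 1) x) (Ioi 2) 2 :=
    (hφ 1 le_rfl).comp_of_eq hsub (fun m (hm : 2 < m) => show 1 ≤ m - 1 by linarith)
      (by norm_num)
  have hφ_id : ContinuousWithinAt (fun m : ℝ => phiR m x) (Ioi 2) 2 :=
    (hφ 2 (by norm_num)).mono fun m (hm : 2 < m) => show 1 ≤ m by linarith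
  have hF : ContinuousWithinAt (fun m : ℝ => 2 - 2 * (1 + β) * phiR 2 x
      - m * (m - 1) * phiR (m - 1) x + m * (m - 1 + β) * phiR m x) (Ioi 2) 2 :=
    (continuousWithinAt_const.sub ((continuousWithinAt_id.mul hsub).mul hφ_sub)).add
      ((continuousWithinAt_id.mul (hsub.add continuousWithinAt_const)).mul hφ_id)
  convert hF.tendsto using 2
  norm_num [phiR_one]
  ring

/-- for `x` in the Kingman simplex, as `m ↓ 2`,
`𝒜_{1,β}(φ₂ − φ_m)(x) = 2 − 2(1+β)φ₂(x) − m(m−1)φ_{m−1}(x) + m(m−1+β)φ_m(x)`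
converges to `2·(1 − ∑'_i x_i)`. -/
theorem generator_phi2_sub_phim_limit (β : ℝ) (x : ℕ → ℝ) (hsum : Summable x)
    (hx0 : ∀ i, 0 ≤ x i) (hx1 : ∀ i, x i ≤ 1) (htot : (∑' i, x i) ≤ 1) :
    Filter.Tendsto
      (fun m : ℝ =>
        2 - 2 * (1 + β) * phiR 2 x - m * (m - 1) * phiR (m - 1) x
          + m * (m - 1 + β) * phiR m x)
      (nhdsWithin 2 (Set.Ioi 2)) (nhds (2 * (1 - ∑' i, x i))) :=
  generator_phi2_sub_phim_limit_general β x hsum hx0 hx1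
end

section
/- Let x, x' : ℕ → ℝ be nonincreasing sequences with 0 ≤ x_i ≤ 1 and 0 ≤ x'_i ≤ 1 for all i, and with all finite partial sums ∑_{i<n} x_i ≤ 1 and ∑_{i<n} x'_i ≤ 1. If ∑'_i x_i^m = ∑'_i (x'_i)^m for every natural number m ≥ 2, then x = x'. -/
/-- Auxiliary: under the stated bounds, equal power sums force `x 0 ≤ x' 0`. -/
lemma powerSums_head_le (x x' : ℕ → ℝ)
    (hx0 : ∀ i, 0 ≤ x i) (hx'0 : ∀ i, 0 ≤ x' i)
    (hxle1 : ∀ i, x i ≤ 1) (hx'le1 : ∀ i, x' i ≤ 1)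
    (hx'1 : ∀ i, x' i ≤ x' 0)
    (hxs : Summable x) (hx's : Summable x')
    (hx't : ∑' i, x' i ≤ 1)
    (hmom : ∀ m : ℕ, 2 ≤ m → (∑' i, x i ^ m) = ∑' i, x' i ^ m) :
    x 0 ≤ x' 0 := by
  by_contra h
  push_neg at h
  have hx0pos : 0 < x 0 := lt_of_le_of_lt (hx'0 0) h
  -- key inequality : for all m ≥ 2, x 0 ^ m ≤ x' 0 ^ (m - 1)
  have key : ∀ m : ℕ, 2 ≤ m → x 0 ^ m ≤ x' 0 ^ (m - 1) := by
    intro m hm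
    have hm1 : 1 ≤ m := le_trans (by norm_num) hm
    have hm0 : m ≠ 0 := by omega
    have hsm : Summable (fun i => x i ^ m) :=
      hxs.of_nonneg_of_le (fun i => pow_nonneg (hx0 i) m)
        (fun i => pow_le_of_le_one (hx0 i) (hxle1 i) hm0)
    have hsm' : Summable (fun i => x' i ^ m) :=
      hx's.of_nonneg_of_le (fun i => pow_nonneg (hx'0 i) m)
        (fun i => pow_le_of_le_one (hx'0 i) (hx'le1 i) hm0)
    have h1 : x 0 ^ m ≤ ∑' i, x i ^ m :=
      Summable.le_tsum hsm 0 (fun j _ => pow_nonneg (hx0 j) m)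
    have h2 : (∑' i, x' i ^ m) ≤ x' 0 ^ (m - 1) := by
      calc (∑' i, x' i ^ m) ≤ ∑' i, x' 0 ^ (m - 1) * x' i := by
            apply Summable.tsum_le_tsum _ hsm' (hx's.mul_left _)
            intro i
            calc x' i ^ m = x' i ^ (m - 1) * x' i := by
                  rw [← pow_succ, Nat.sub_add_cancel hm1]
              _ ≤ x' 0 ^ (m - 1) * x' i :=
                  mul_le_mul_of_nonneg_right
                    (pow_le_pow_left₀ (hx'0 i) (hx'1 i) _) (hx'0 i)
        _ = x' 0 ^ (m - 1) * ∑' i, x' i := tsum_mul_left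
        _ ≤ x' 0 ^ (m - 1) * 1 :=
            mul_le_mul_of_nonneg_left hx't (pow_nonneg (hx'0 0) _)
        _ = x' 0 ^ (m - 1) := mul_one _
    calc x 0 ^ m ≤ ∑' i, x i ^ m := h1
      _ = ∑' i, x' i ^ m := hmom m hm
      _ ≤ x' 0 ^ (m - 1) := h2
  rcases eq_or_lt_of_le (hx'0 0) with h0 | h0
  · have := key 2 le_rfl
    simp [← h0] at this
    nlinarith
  · -- `x' 0 > 0`, so the ratio `r > 1` and powers blow up
    set r : ℝ := x 0 / x' 0 with hr
    have hr1 : 1 < r := (one_lt_div h0).mpr h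
    obtain ⟨n, hn⟩ := pow_unbounded_of_one_lt (1 / x 0) hr1
    have hrn : (1 : ℝ) / x 0 < r ^ (n + 1) :=
      lt_of_lt_of_le hn (pow_le_pow_right₀ hr1.le (Nat.le_succ n))
    have hA : 1 < r ^ (n + 1) * x 0 := (div_lt_iff₀ hx0pos).mp hrn
    have h1 : x 0 ^ (n + 2) ≤ x' 0 ^ (n + 1) := by
      simpa using key (n + 2) (by omega)
    have hB : x 0 * r ^ (n + 1) ≤ 1 := by
      calc x 0 * r ^ (n + 1) = x 0 ^ (n + 2) / x' 0 ^ (n + 1) := by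
            rw [hr, div_pow]; ring
        _ ≤ 1 := div_le_one_of_le₀ h1 (pow_nonneg (hx'0 0) _)
    nlinarith

/-- the power sums `φ_m`, `m ≥ 2`, separate points of the Kingman
simplex: two nonincreasing `[0,1]`-valued sequences with all partial sums `≤ 1`
and equal power sums of every order `m ≥ 2` coincide. -/
theorem powerSums_separate_points (x x' : ℕ → ℝ)
    (hx : ∀ i, 0 ≤ x (i + 1) ∧ x (i + 1) ≤ x i ∧ x i ≤ 1)
    (hx' : ∀ i, 0 ≤ x' (i + 1) ∧ x' (i + 1) ≤ x' i ∧ x' i ≤ 1)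
    (hsum : ∀ n, ∑ i ∈ Finset.range n, x i ≤ 1)
    (hsum' : ∀ n, ∑ i ∈ Finset.range n, x' i ≤ 1)
    (hmom : ∀ m : ℕ, 2 ≤ m → (∑' i, x i ^ m) = ∑' i, x' i ^ m) :
    x = x' := by
  -- basic facts
  have hx0 : ∀ i, 0 ≤ x i := by
    intro i
    cases i with
    | zero => exact le_trans (hx 0).1 (hx 0).2.1
    | succ n => exact (hx n).1
  have hx'0 : ∀ i, 0 ≤ x' i := by
    intro i
    cases i with
    | zero => exact le_trans (hx' 0).1 (hx' 0).2.1
    | succ n => exact (hx' n).1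
  have hanti : Antitone x := antitone_nat_of_succ_le (fun n => (hx n).2.1)
  have hanti' : Antitone x' := antitone_nat_of_succ_le (fun n => (hx' n).2.1)
  have hxs : Summable x := summable_of_sum_range_le hx0 hsum
  have hx's : Summable x' := summable_of_sum_range_le hx'0 hsum'
  have hxt : ∑' i, x i ≤ 1 := Summable.tsum_le_of_sum_range_le hxs hsum
  have hx't : ∑' i, x' i ≤ 1 := Summable.tsum_le_of_sum_range_le hx's hsum'
  funext k
  induction k using Nat.strong_induction_on with
  | _ k ih =>
    -- tail sequences
    set y : ℕ → ℝ := fun i => x (i + k) with hy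
    set y' : ℕ → ℝ := fun i => x' (i + k) with hy'
    have hys : Summable y := (summable_nat_add_iff k).mpr hxs
    have hy's : Summable y' := (summable_nat_add_iff k).mpr hx's
    -- tail power sums agree
    have hmomy : ∀ m : ℕ, 2 ≤ m → (∑' i, y i ^ m) = ∑' i, y' i ^ m := by
      intro m hm
      have hm0 : m ≠ 0 := by omega
      have hsm : Summable (fun i => x i ^ m) :=
        hxs.of_nonneg_of_le (fun i => pow_nonneg (hx0 i) m)
          (fun i => pow_le_of_le_one (hx0 i) (le_trans (hanti (Nat.zero_le i)) (hx 0).2.2) hm0)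
      have hsm' : Summable (fun i => x' i ^ m) :=
        hx's.of_nonneg_of_le (fun i => pow_nonneg (hx'0 i) m)
          (fun i => pow_le_of_le_one (hx'0 i) (le_trans (hanti' (Nat.zero_le i)) (hx' 0).2.2) hm0)
      have e1 := Summable.sum_add_tsum_nat_add (f := fun i => x i ^ m) k hsm
      have e2 := Summable.sum_add_tsum_nat_add (f := fun i => x' i ^ m) k hsm'
      have hheads : ∑ i ∈ Finset.range k, x i ^ m = ∑ i ∈ Finset.range k, x' i ^ m := by
        apply Finset.sum_congr rfl
        intro i hi
        rw [ih i (Finset.mem_range.mp hi)]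
      have := hmom m hm
      simp only [hy, hy']
      linarith [e1, e2, hheads.le, hheads.ge]
    have hq : y 0 = y' 0 := by
      have hle1 : ∀ i, y i ≤ 1 := fun i => le_trans (hanti (Nat.zero_le _)) (hx 0).2.2
      have hle1' : ∀ i, y' i ≤ 1 := fun i => le_trans (hanti' (Nat.zero_le _)) (hx' 0).2.2
      have hmono : ∀ i, y i ≤ y 0 := fun i => hanti (by omega)
      have hmono' : ∀ i, y' i ≤ y' 0 := fun i => hanti' (by omega)
      have hyt : ∑' i, y i ≤ 1 := by
        have := Summable.sum_add_tsum_nat_add (f := x) k hxs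
        have hhead : 0 ≤ ∑ i ∈ Finset.range k, x i :=
          Finset.sum_nonneg (fun i _ => hx0 i)
        simp only [hy]
        linarith
      have hy't : ∑' i, y' i ≤ 1 := by
        have := Summable.sum_add_tsum_nat_add (f := x') k hx's
        have hhead : 0 ≤ ∑ i ∈ Finset.range k, x' i :=
          Finset.sum_nonneg (fun i _ => hx'0 i)
        simp only [hy']
        linarith
      have l1 : y 0 ≤ y' 0 :=
        powerSums_head_le y y' (fun i => hx0 _) (fun i => hx'0 _)
          hle1 hle1' hmono' hys hy's hy't hmomy
      have l2 : y' 0 ≤ y 0 :=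
        powerSums_head_le y' y (fun i => hx'0 _) (fun i => hx0 _)
          hle1' hle1 hmono hy's hys hyt (fun m hm => (hmomy m hm).symm)
      linarith
    simpa [hy, hy'] using hq
end
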